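/- arXiv:1610.08499 — 4 statements merged into one kernel-verified Lean document; each statement's English description precedes it below -/
import Mathlib

section
/- Let λ₀, μ₀ ∈ ℝ with μ₀ > 0 and λ₀ + 2μ₀ > 0, and let Γ be the two-dimensional Kelvin matrix. Then each column of Γ solves the homogeneous elastostatic (Lamé) system away from the origin: for every x ∈ ℝ² \ {0} and all indices j, k ∈ {1,2}, μ₀·Σ_{i=1}^{2} ∂²γ_{kj}/∂x_i²(x) + (λ₀ + μ₀)·∂/∂x_k ( Σ_{i=1}^{2} ∂γ_{ij}/∂x_i (x) ) = 0. -/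
/-!
Both terms of the Lamé operator applied to the `j`-th column of `Γ` are multiples of the Hessian
entry `∂_k ∂_j log |x| = ∂_k (x_j / |x|²)`. Since `log |x|` is harmonic in the plane and
`Δ (x_k x_j / |x|²) = 2 ∂_k (x_j / |x|²)`, the Laplacian of `γ_kj` is `-2β` times it, while the
divergence of the column is `(α - β) x_j / |x|²`. The coefficient `-2 μ₀ β + (λ₀ + μ₀)(α - β)`
vanishes because `α - β = 2 μ₀ / (4 π μ₀ (λ₀ + 2 μ₀))`, so `(λ₀ + μ₀)(α - β) = 2 μ₀ β`.
-/

/-- Partial derivative in the `i`-th coordinate direction of a scalar field on `ℝ²`. -/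
noncomputable def pd2 (i : Fin 2) (f : EuclideanSpace ℝ (Fin 2) → ℝ)
    (x : EuclideanSpace ℝ (Fin 2)) : ℝ :=
  fderiv ℝ f x (EuclideanSpace.single i 1)

/-- Entry `γ_{ij}` of the two-dimensional Kelvin matrix:
`γ_{ij}(x) = α δ_{ij} ln|x| − β x_i x_j / |x|²`. -/
noncomputable def kelvin2 (α β : ℝ) (i j : Fin 2) (x : EuclideanSpace ℝ (Fin 2)) : ℝ :=
  α * (if i = j then (1 : ℝ) else 0) * Real.log ‖x‖ - β * x i * x j / ‖x‖ ^ 2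

open Filter Topology

local notation "ℝ²" => EuclideanSpace ℝ (Fin 2)

section Calculus

variable {f g : ℝ² → ℝ} {x : ℝ²} (i : Fin 2)

theorem HasFDerivAt.pd2_eq {f' : ℝ² →L[ℝ] ℝ} (h : HasFDerivAt f f' x) :
    pd2 i f x = f' (EuclideanSpace.single i 1) := by
  rw [pd2, h.fderiv]

theorem Filter.EventuallyEq.pd2_eq (h : f =ᶠ[𝓝 x] g) : pd2 i f x = pd2 i g x := by
  rw [pd2, pd2, h.fderiv_eq]

theorem pd2_add (hf : DifferentiableAt ℝ f x) (hg : DifferentiableAt ℝ g x) :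
    pd2 i (fun y => f y + g y) x = pd2 i f x + pd2 i g x :=
  HasFDerivAt.pd2_eq i (hf.hasFDerivAt.fun_add hg.hasFDerivAt)

theorem pd2_sub (hf : DifferentiableAt ℝ f x) (hg : DifferentiableAt ℝ g x) :
    pd2 i (fun y => f y - g y) x = pd2 i f x - pd2 i g x :=
  HasFDerivAt.pd2_eq i (hf.hasFDerivAt.fun_sub hg.hasFDerivAt)

theorem pd2_mul (hf : DifferentiableAt ℝ f x) (hg : DifferentiableAt ℝ g x) :
    pd2 i (fun y => f y * g y) x = pd2 i f x * g x + f x * pd2 i g x := by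
  rw [HasFDerivAt.pd2_eq i (hf.hasFDerivAt.fun_mul hg.hasFDerivAt), pd2, pd2]
  simp only [add_apply, smul_apply, smul_eq_mul]
  ring

theorem pd2_const_mul (c : ℝ) : pd2 i (fun y => c * f y) x = c * pd2 i f x := by
  change fderiv ℝ (c • f) x _ = _
  rw [fderiv_const_smul_field]
  rfl

theorem pd2_inv (hf : DifferentiableAt ℝ f x) (hfx : f x ≠ 0) :
    pd2 i (fun y => (f y)⁻¹) x = -pd2 i f x / f x ^ 2 := by
  have h : HasFDerivAt (fun y => (f y)⁻¹) _ x :=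
    (hasDerivAt_inv hfx).comp_hasFDerivAt x hf.hasFDerivAt
  rw [h.pd2_eq i, pd2]
  simp only [smul_apply, smul_eq_mul]
  ring

theorem pd2_log (hf : DifferentiableAt ℝ f x) (hfx : f x ≠ 0) :
    pd2 i (fun y => Real.log (f y)) x = pd2 i f x / f x := by
  rw [HasFDerivAt.pd2_eq i (hf.hasFDerivAt.log hfx), pd2]
  simp only [smul_apply, smul_eq_mul]
  ring

theorem pd2_coord (a : Fin 2) : pd2 i (fun y => y a) x = if a = i then 1 else 0 := by
  have h : HasFDerivAt (fun y : ℝ² => y a) _ x := (EuclideanSpace.proj (𝕜 := ℝ) a).hasFDerivAt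
  rw [h.pd2_eq i]
  simp

theorem pd2_norm_sq : pd2 i (fun y => ‖y‖ ^ 2) x = 2 * x i := by
  rw [HasFDerivAt.pd2_eq i (hasStrictFDerivAt_norm_sq x).hasFDerivAt]
  simp [EuclideanSpace.inner_single_right]

theorem pd2_div (hf : DifferentiableAt ℝ f x) (hg : DifferentiableAt ℝ g x) (hgx : g x ≠ 0) :
    pd2 i (fun y => f y / g y) x = (pd2 i f x * g x - f x * pd2 i g x) / g x ^ 2 := by
  simp only [div_eq_mul_inv]
  rw [pd2_mul i hf (hg.fun_inv hgx), pd2_inv i hg hgx]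
  field_simp
  ring

theorem DifferentiableAt.fun_div' (hf : DifferentiableAt ℝ f x) (hg : DifferentiableAt ℝ g x)
    (hgx : g x ≠ 0) : DifferentiableAt ℝ (fun y => f y / g y) x := by
  simpa only [div_eq_mul_inv] using hf.fun_mul (hg.fun_inv hgx)

end Calculus

section Radial

variable {x : ℝ²}

theorem differentiableAt_coord (a : Fin 2) : DifferentiableAt ℝ (fun y : ℝ² => y a) x :=
  (EuclideanSpace.proj (𝕜 := ℝ) a).differentiableAt

theorem differentiableAt_norm_sq : DifferentiableAt ℝ (fun y : ℝ² => ‖y‖ ^ 2) x :=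
  (hasStrictFDerivAt_norm_sq x).hasFDerivAt.differentiableAt

theorem norm_sq_eq_coord_sq (x : ℝ²) : ‖x‖ ^ 2 = x 0 ^ 2 + x 1 ^ 2 := by
  simp [EuclideanSpace.norm_sq_eq, Fin.sum_univ_two]

variable (hx : x ≠ 0)
include hx

theorem norm_sq_ne_zero_of_ne_zero : ‖x‖ ^ 2 ≠ 0 := by positivity

theorem differentiableAt_coord_div_norm_sq (a : Fin 2) :
    DifferentiableAt ℝ (fun y : ℝ² => y a / ‖y‖ ^ 2) x :=
  (differentiableAt_coord a).fun_div' differentiableAt_norm_sq (norm_sq_ne_zero_of_ne_zero hx)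

theorem differentiableAt_coord_mul_coord_div_norm_sq (a b : Fin 2) :
    DifferentiableAt ℝ (fun y : ℝ² => y a * y b / ‖y‖ ^ 2) x :=
  ((differentiableAt_coord a).fun_mul (differentiableAt_coord b)).fun_div' differentiableAt_norm_sq
    (norm_sq_ne_zero_of_ne_zero hx)

theorem differentiableAt_log_norm : DifferentiableAt ℝ (fun y : ℝ² => Real.log ‖y‖) x :=
  (differentiableAt_id.norm ℝ hx).log (norm_ne_zero_iff.mpr hx)

theorem pd2_coord_div_norm_sq (a l : Fin 2) :
    pd2 l (fun y => y a / ‖y‖ ^ 2) x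
      = (if a = l then 1 else 0) / ‖x‖ ^ 2 - 2 * (x a / ‖x‖ ^ 2) * (x l / ‖x‖ ^ 2) := by
  have := norm_sq_ne_zero_of_ne_zero hx
  rw [pd2_div l (differentiableAt_coord a) differentiableAt_norm_sq this, pd2_coord, pd2_norm_sq]
  field_simp

theorem pd2_coord_mul_coord_div_norm_sq (a b l : Fin 2) :
    pd2 l (fun y => y a * y b / ‖y‖ ^ 2) x
      = (if a = l then 1 else 0) * (x b / ‖x‖ ^ 2) + (if b = l then 1 else 0) * (x a / ‖x‖ ^ 2)
        - 2 * (x a * x b / ‖x‖ ^ 2) * (x l / ‖x‖ ^ 2) := by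
  have := norm_sq_ne_zero_of_ne_zero hx
  rw [pd2_div l ((differentiableAt_coord a).fun_mul (differentiableAt_coord b))
    differentiableAt_norm_sq this, pd2_mul l (differentiableAt_coord a) (differentiableAt_coord b), pd2_coord, pd2_coord,
    pd2_norm_sq]
  field_simp

theorem pd2_log_norm (l : Fin 2) : pd2 l (fun y => Real.log ‖y‖) x = x l / ‖x‖ ^ 2 := by
  have h : (fun y : ℝ² => Real.log ‖y‖) = fun y => 2⁻¹ * Real.log (‖y‖ ^ 2) := by
    ext y
    rw [Real.log_pow]
    ring
  rw [h, pd2_const_mul, pd2_log l differentiableAt_norm_sq (norm_sq_ne_zero_of_ne_zero hx),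
    pd2_norm_sq]
  ring

end Radial

section Laplacian

variable {x : ℝ²} (hx : x ≠ 0)
include hx

theorem pd2_log_norm_eventuallyEq (l : Fin 2) :
    (fun y => pd2 l (fun z => Real.log ‖z‖) y) =ᶠ[𝓝 x] fun y => y l / ‖y‖ ^ 2 := by
  filter_upwards [eventually_ne_nhds hx] with y hy using pd2_log_norm hy l

theorem sum_pd2_pd2_log_norm :
    ∑ i, pd2 i (fun y => pd2 i (fun z => Real.log ‖z‖) y) x = 0 := by
  have hx2 := norm_sq_ne_zero_of_ne_zero hx
  simp only [fun i => (pd2_log_norm_eventuallyEq hx i).pd2_eq i, pd2_coord_div_norm_sq hx,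
    Fin.sum_univ_two]
  rw [norm_sq_eq_coord_sq] at hx2 ⊢
  simp
  field_simp
  ring

theorem pd2_coord_mul_coord_div_norm_sq_eventuallyEq (a b l : Fin 2) :
    (fun y => pd2 l (fun z => z a * z b / ‖z‖ ^ 2) y) =ᶠ[𝓝 x] fun y =>
      (if a = l then 1 else 0) * (y b / ‖y‖ ^ 2) + (if b = l then 1 else 0) * (y a / ‖y‖ ^ 2)
        - 2 * (y a * y b / ‖y‖ ^ 2) * (y l / ‖y‖ ^ 2) := by
  filter_upwards [eventually_ne_nhds hx] with y hy using pd2_coord_mul_coord_div_norm_sq hy a b l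

theorem differentiableAt_pd2_log_norm (l : Fin 2) :
    DifferentiableAt ℝ (fun y => pd2 l (fun z => Real.log ‖z‖) y) x :=
  (differentiableAt_coord_div_norm_sq hx l).congr_of_eventuallyEq
    (pd2_log_norm_eventuallyEq hx l)

theorem differentiableAt_pd2_coord_mul_coord_div_norm_sq (a b l : Fin 2) :
    DifferentiableAt ℝ (fun y => pd2 l (fun z => z a * z b / ‖z‖ ^ 2) y) x := by
  have hφ := differentiableAt_coord_div_norm_sq hx
  have hψ := differentiableAt_coord_mul_coord_div_norm_sq hx a b
  exact ((((hφ b).const_mul _).fun_add ((hφ a).const_mul _)).fun_sub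
    ((hψ.const_mul 2).fun_mul (hφ l))).congr_of_eventuallyEq
    (pd2_coord_mul_coord_div_norm_sq_eventuallyEq hx a b l)

theorem pd2_pd2_coord_mul_coord_div_norm_sq (a b l : Fin 2) :
    pd2 l (fun y => pd2 l (fun z => z a * z b / ‖z‖ ^ 2) y) x
      = (if a = l then 1 else 0) * pd2 l (fun y => y b / ‖y‖ ^ 2) x
        + (if b = l then 1 else 0) * pd2 l (fun y => y a / ‖y‖ ^ 2) x
        - 2 * (pd2 l (fun y => y a * y b / ‖y‖ ^ 2) x * (x l / ‖x‖ ^ 2)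
          + x a * x b / ‖x‖ ^ 2 * pd2 l (fun y => y l / ‖y‖ ^ 2) x) := by
  have hφ := differentiableAt_coord_div_norm_sq hx
  have hψ := differentiableAt_coord_mul_coord_div_norm_sq hx a b
  rw [(pd2_coord_mul_coord_div_norm_sq_eventuallyEq hx a b l).pd2_eq,
    pd2_sub l (((hφ b).const_mul _).fun_add ((hφ a).const_mul _)) ((hψ.const_mul 2).fun_mul (hφ l)),
    pd2_add l ((hφ b).const_mul _) ((hφ a).const_mul _), pd2_const_mul, pd2_const_mul,
    pd2_mul l (hψ.const_mul 2) (hφ l), pd2_const_mul]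
  ring

theorem sum_pd2_pd2_coord_mul_coord_div_norm_sq (a b : Fin 2) :
    ∑ i, pd2 i (fun y => pd2 i (fun z => z a * z b / ‖z‖ ^ 2) y) x
      = 2 * pd2 a (fun y => y b / ‖y‖ ^ 2) x := by
  have hx2 := norm_sq_ne_zero_of_ne_zero hx
  simp only [pd2_pd2_coord_mul_coord_div_norm_sq hx, pd2_coord_div_norm_sq hx,
    pd2_coord_mul_coord_div_norm_sq hx, Fin.sum_univ_two]
  rw [norm_sq_eq_coord_sq] at hx2 ⊢
  fin_cases a <;> fin_cases b <;> simp <;> field_simp <;> ring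

end Laplacian

section Kelvin

variable (α β : ℝ) {x : ℝ²}

theorem kelvin2_eq (i j : Fin 2) : kelvin2 α β i j
    = fun y => α * (if i = j then 1 else 0) * Real.log ‖y‖ - β * (y i * y j / ‖y‖ ^ 2) := by
  ext y
  rw [kelvin2]
  ring

variable (hx : x ≠ 0)
include hx

theorem pd2_kelvin2 (i j l : Fin 2) : pd2 l (kelvin2 α β i j) x
    = α * (if i = j then 1 else 0) * pd2 l (fun y => Real.log ‖y‖) x
      - β * pd2 l (fun y => y i * y j / ‖y‖ ^ 2) x := by
  rw [kelvin2_eq, pd2_sub l ((differentiableAt_log_norm hx).const_mul _)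
    ((differentiableAt_coord_mul_coord_div_norm_sq hx i j).const_mul _), pd2_const_mul,
    pd2_const_mul]

theorem sum_pd2_kelvin2 (j : Fin 2) :
    ∑ i, pd2 i (kelvin2 α β i j) x = (α - β) * (x j / ‖x‖ ^ 2) := by
  have hx2 := norm_sq_ne_zero_of_ne_zero hx
  simp only [pd2_kelvin2 α β hx, pd2_log_norm hx, pd2_coord_mul_coord_div_norm_sq hx,
    Fin.sum_univ_two]
  rw [norm_sq_eq_coord_sq] at hx2 ⊢
  fin_cases j <;> simp <;> field_simp <;> ring

theorem pd2_sum_pd2_kelvin2 (j k : Fin 2) :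
    pd2 k (fun y => ∑ i, pd2 i (kelvin2 α β i j) y) x
      = (α - β) * pd2 k (fun y => y j / ‖y‖ ^ 2) x := by
  have h : (fun y => ∑ i, pd2 i (kelvin2 α β i j) y) =ᶠ[𝓝 x]
      fun y => (α - β) * (y j / ‖y‖ ^ 2) := by
    filter_upwards [eventually_ne_nhds hx] with y hy using sum_pd2_kelvin2 α β hy j
  rw [h.pd2_eq, pd2_const_mul]

theorem sum_pd2_pd2_kelvin2 (j k : Fin 2) :
    ∑ i, pd2 i (fun y => pd2 i (kelvin2 α β k j) y) x
      = -(2 * β) * pd2 k (fun y => y j / ‖y‖ ^ 2) x := by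
  have h (i : Fin 2) : (fun y => pd2 i (kelvin2 α β k j) y) =ᶠ[𝓝 x] fun y =>
      α * (if k = j then 1 else 0) * pd2 i (fun z => Real.log ‖z‖) y
        - β * pd2 i (fun z => z k * z j / ‖z‖ ^ 2) y := by
    filter_upwards [eventually_ne_nhds hx] with y hy using pd2_kelvin2 α β hy k j i
  simp only [fun i => (h i).pd2_eq i]
  rw [Finset.sum_congr rfl fun i _ => pd2_sub i ((differentiableAt_pd2_log_norm hx i).const_mul _)
      ((differentiableAt_pd2_coord_mul_coord_div_norm_sq hx k j i).const_mul _)]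
  simp only [pd2_const_mul, Finset.sum_sub_distrib, ← Finset.mul_sum, sum_pd2_pd2_log_norm hx,
    sum_pd2_pd2_coord_mul_coord_div_norm_sq hx]
  ring

end Kelvin

theorem kelvin2_solves_lame_general
    (l0 m0 : ℝ)
    (α β : ℝ)
    (hα : α = (l0 + 3 * m0) / (4 * Real.pi * m0 * (l0 + 2 * m0)))
    (hβ : β = (l0 + m0) / (4 * Real.pi * m0 * (l0 + 2 * m0)))
    (x : EuclideanSpace ℝ (Fin 2)) (hx : x ≠ 0) (j k : Fin 2) :
    m0 * (∑ i, pd2 i (fun y => pd2 i (kelvin2 α β k j) y) x)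
      + (l0 + m0) * pd2 k (fun y => ∑ i, pd2 i (kelvin2 α β i j) y) x = 0 := by
  rw [sum_pd2_pd2_kelvin2 α β hx, pd2_sum_pd2_kelvin2 α β hx, hα, hβ]
  ring

theorem kelvin2_solves_lame
    (l0 m0 : ℝ) (hm : 0 < m0) (hl : 0 < l0 + 2 * m0)
    (α β : ℝ)
    (hα : α = (l0 + 3 * m0) / (4 * Real.pi * m0 * (l0 + 2 * m0)))
    (hβ : β = (l0 + m0) / (4 * Real.pi * m0 * (l0 + 2 * m0)))
    (x : EuclideanSpace ℝ (Fin 2)) (hx : x ≠ 0) (j k : Fin 2) :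
    m0 * (∑ i, pd2 i (fun y => pd2 i (kelvin2 α β k j) y) x)
      + (l0 + m0) * pd2 k (fun y => ∑ i, pd2 i (kelvin2 α β i j) y) x = 0 :=
  kelvin2_solves_lame_general l0 m0 α β hα hβ x hx j k
end

section
/- Let λ₀, μ₀ ∈ ℝ with μ₀ > 0 and λ₀ + 2μ₀ > 0, and let Γ be the three-dimensional Kelvin matrix. Then each column of Γ solves the homogeneous elastostatic (Lamé) system away from the origin: for every x ∈ ℝ³ \ {0} and all indices j, k ∈ {1,2,3}, μ₀·Σ_{i=1}^{3} ∂²γ_{kj}/∂x_i²(x) + (λ₀ + μ₀)·∂/∂x_k ( Σ_{i=1}^{3} ∂γ_{ij}/∂x_i (x) ) = 0. -/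
/-- Partial derivative in the `i`-th coordinate direction of a scalar field on `ℝ³`. -/
noncomputable def pd3 (i : Fin 3) (f : EuclideanSpace ℝ (Fin 3) → ℝ)
    (x : EuclideanSpace ℝ (Fin 3)) : ℝ :=
  fderiv ℝ f x (EuclideanSpace.single i 1)

/-- Entry `γ_{ij}` of the three-dimensional Kelvin matrix:
`γ_{ij}(x) = −(α/(2|x|)) δ_{ij} − (β/(2|x|³)) x_i x_j`. -/
noncomputable def kelvin3 (α β : ℝ) (i j : Fin 3) (x : EuclideanSpace ℝ (Fin 3)) : ℝ :=
  -(α / (2 * ‖x‖)) * (if i = j then (1 : ℝ) else 0) - (β / (2 * ‖x‖ ^ 3)) * x i * x j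

/-!
Write `r = ‖x‖`. Differentiating `γ_{ij} = -(α/2) δ_{ij} r⁻¹ - (β/2) x_i x_j r⁻³` twice and
contracting indices, the Laplacian of `γ_{kj}` is `β (3 x_k x_j r⁻⁵ - δ_{kj} r⁻³)`, while the
divergence of the `j`-th column is `((α - β)/2) x_j r⁻³`, whose `k`-th derivative is
`((α - β)/2) (δ_{kj} r⁻³ - 3 x_k x_j r⁻⁵)`. The two terms of the Lamé operator cancel because
`μ₀ β = (λ₀ + μ₀) (α - β)/2`, which follows from `α - β = 2μ₀ / (4πμ₀(λ₀ + 2μ₀))`.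
-/

open Filter Topology

section NormPow

variable {E : Type*} [NormedAddCommGroup E] [InnerProductSpace ℝ E]

theorem hasFDerivAt_norm_of_ne_zero {x : E} (hx : x ≠ 0) :
    HasFDerivAt (fun y : E => ‖y‖) (‖x‖⁻¹ • innerSL ℝ x) x := by
  have h := (hasStrictFDerivAt_norm_sq x).hasFDerivAt.sqrt (by simpa using hx)
  simp only [Real.sqrt_sq (norm_nonneg _)] at h
  convert h using 1
  ext v
  simp only [smul_apply, coe_innerSL_apply, smul_eq_mul, one_div, mul_inv_rev, nsmul_eq_mul,
    Nat.cast_ofNat]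
  field_simp

theorem hasFDerivAt_inv_norm_pow (n : ℕ) {x : E} (hx : x ≠ 0) :
    HasFDerivAt (fun y : E => (‖y‖ ^ n)⁻¹) ((-n * (‖x‖ ^ (n + 2))⁻¹) • innerSL ℝ x) x := by
  have hr : ‖x‖ ≠ 0 := norm_ne_zero_iff.mpr hx
  refine (((hasDerivAt_pow n ‖x‖).inv (pow_ne_zero n hr)).comp_hasFDerivAt x
    (hasFDerivAt_norm_of_ne_zero hx)).congr_fderiv ?_
  rw [smul_smul]
  congr 1
  rcases n with _ | n
  · simp
  · rw [Nat.add_sub_cancel]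
    field_simp
    ring

end NormPow

def kroneckerDelta {ι : Type*} [DecidableEq ι] (i j : ι) : ℝ := if i = j then 1 else 0

local notation "δ" => kroneckerDelta

section Coordinates

variable {ι : Type*}

theorem EuclideanSpace.hasFDerivAt_apply (m : ι) (y : EuclideanSpace ℝ ι) :
    HasFDerivAt (fun z : EuclideanSpace ℝ ι => z m) (EuclideanSpace.proj (𝕜 := ℝ) m) y :=
  (EuclideanSpace.proj (𝕜 := ℝ) m).hasFDerivAt

variable [DecidableEq ι]

theorem kroneckerDelta_comm (i j : ι) : δ i j = δ j i := by
  simp only [kroneckerDelta, eq_comm]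

theorem sum_kroneckerDelta_self [Fintype ι] : ∑ i : ι, δ i i = Fintype.card ι := by
  simp [kroneckerDelta]

theorem sum_kroneckerDelta_mul [Fintype ι] (k : ι) (f : ι → ℝ) : ∑ i, δ k i * f i = f k := by
  simp [kroneckerDelta]

theorem EuclideanSpace.proj_single_one (m k : ι) :
    EuclideanSpace.proj (𝕜 := ℝ) m (EuclideanSpace.single k 1) = δ m k := by
  simp [kroneckerDelta]

theorem EuclideanSpace.innerSL_single_one [Fintype ι] (y : EuclideanSpace ℝ ι) (k : ι) :
    innerSL ℝ y (EuclideanSpace.single k 1) = y k := by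
  simp [EuclideanSpace.inner_single_right]

end Coordinates

local notation "E3" => EuclideanSpace ℝ (Fin 3)

theorem pd3_eq_of_hasFDerivAt {f : E3 → ℝ} {L : E3 →L[ℝ] ℝ} {x : E3} (h : HasFDerivAt f L x)
    (i : Fin 3) : pd3 i f x = L (EuclideanSpace.single i 1) := by
  rw [pd3, h.fderiv]

theorem pd3_congr_of_eventuallyEq {f g : E3 → ℝ} {x : E3} (h : f =ᶠ[𝓝 x] g) (i : Fin 3) :
    pd3 i f x = pd3 i g x := by
  rw [pd3, pd3, h.fderiv_eq]

noncomputable def kelvin3Deriv (α β : ℝ) (i j k : Fin 3) (y : E3) : ℝ :=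
  α / 2 * δ i j * y k * (‖y‖ ^ 3)⁻¹ + 3 * β / 2 * y i * y j * y k * (‖y‖ ^ 5)⁻¹
    - β / 2 * (δ i k * y j + δ j k * y i) * (‖y‖ ^ 3)⁻¹

theorem pd3_kelvin3 (α β : ℝ) (i j k : Fin 3) {y : E3} (hy : y ≠ 0) :
    pd3 k (kelvin3 α β i j) y = kelvin3Deriv α β i j k y := by
  have hK : kelvin3 α β i j = fun z : E3 =>
      -(α / 2) * δ i j * (‖z‖ ^ 1)⁻¹ - β / 2 * ((‖z‖ ^ 3)⁻¹ * z i * z j) := by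
    funext z
    simp only [kelvin3, kroneckerDelta, div_eq_mul_inv, mul_inv, pow_one]
    ring
  have hc (m : Fin 3) := EuclideanSpace.hasFDerivAt_apply m y
  rw [hK, pd3_eq_of_hasFDerivAt (((hasFDerivAt_inv_norm_pow 1 hy).const_mul _).fun_sub
    ((((hasFDerivAt_inv_norm_pow 3 hy).fun_mul (hc i)).fun_mul (hc j)).const_mul _))]
  simp only [add_apply, sub_apply, smul_apply, smul_eq_mul, EuclideanSpace.innerSL_single_one,
    EuclideanSpace.proj_single_one, kelvin3Deriv]
  field_simp
  ring

theorem pd3_kelvin3Deriv (α β : ℝ) (i j k l : Fin 3) {y : E3} (hy : y ≠ 0) :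
    pd3 l (kelvin3Deriv α β i j k) y =
      α / 2 * δ i j * (δ k l * (‖y‖ ^ 3)⁻¹ - 3 * y k * y l * (‖y‖ ^ 5)⁻¹)
      + 3 * β / 2 * ((δ i l * y j * y k + δ j l * y i * y k + δ k l * y i * y j) * (‖y‖ ^ 5)⁻¹
          - 5 * y i * y j * y k * y l * (‖y‖ ^ 7)⁻¹)
      - β / 2 * ((δ i k * δ j l + δ j k * δ i l) * (‖y‖ ^ 3)⁻¹
          - 3 * (δ i k * y j + δ j k * y i) * y l * (‖y‖ ^ 5)⁻¹) := by
  have hc (m : Fin 3) := EuclideanSpace.hasFDerivAt_apply m y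
  have h3 := hasFDerivAt_inv_norm_pow 3 hy
  have h5 := hasFDerivAt_inv_norm_pow 5 hy
  have hK : kelvin3Deriv α β i j k = fun z : E3 =>
      α / 2 * δ i j * (z k * (‖z‖ ^ 3)⁻¹) + 3 * β / 2 * (z i * z j * (z k * (‖z‖ ^ 5)⁻¹))
      - (β / 2 * δ i k * (z j * (‖z‖ ^ 3)⁻¹) + β / 2 * δ j k * (z i * (‖z‖ ^ 3)⁻¹)) := by
    funext z
    simp only [kelvin3Deriv]
    ring
  rw [hK, pd3_eq_of_hasFDerivAt
    (((((hc k).fun_mul h3).const_mul _).fun_add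
      ((((hc i).fun_mul (hc j)).fun_mul ((hc k).fun_mul h5)).const_mul _)).fun_sub
    ((((hc j).fun_mul h3).const_mul _).fun_add (((hc i).fun_mul h3).const_mul _)))]
  simp only [add_apply, sub_apply, smul_apply, smul_eq_mul, EuclideanSpace.innerSL_single_one,
    EuclideanSpace.proj_single_one]
  push_cast
  ring

theorem sum_pd3_kelvin3 (α β : ℝ) (j : Fin 3) {y : E3} (hy : y ≠ 0) :
    ∑ i, pd3 i (kelvin3 α β i j) y = (α - β) / 2 * (y j * (‖y‖ ^ 3)⁻¹) := by
  have hr : ‖y‖ ≠ 0 := norm_ne_zero_iff.mpr hy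
  have hterm : ∀ i, pd3 i (kelvin3 α β i j) y =
      α / 2 * (‖y‖ ^ 3)⁻¹ * (δ j i * y i) + 3 * β / 2 * y j * (‖y‖ ^ 5)⁻¹ * y i ^ 2
        - β / 2 * y j * (‖y‖ ^ 3)⁻¹ * δ i i - β / 2 * (‖y‖ ^ 3)⁻¹ * (δ j i * y i) := by
    intro i
    rw [pd3_kelvin3 α β i j i hy, kelvin3Deriv, kroneckerDelta_comm i j]
    ring
  simp only [hterm, Finset.sum_add_distrib, Finset.sum_sub_distrib, ← Finset.mul_sum,
    sum_kroneckerDelta_mul, sum_kroneckerDelta_self, ← EuclideanSpace.real_norm_sq_eq,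
    Fintype.card_fin]
  field_simp
  ring

theorem sum_pd3_pd3_kelvin3 (α β : ℝ) (j k : Fin 3) {x : E3} (hx : x ≠ 0) :
    ∑ i, pd3 i (fun y => pd3 i (kelvin3 α β k j) y) x
      = β * (3 * x k * x j * (‖x‖ ^ 5)⁻¹ - δ k j * (‖x‖ ^ 3)⁻¹) := by
  have hr : ‖x‖ ≠ 0 := norm_ne_zero_iff.mpr hx
  have hterm : ∀ i, pd3 i (fun y => pd3 i (kelvin3 α β k j) y) x =
      (α / 2 * δ k j * (‖x‖ ^ 3)⁻¹ + 3 * β / 2 * x k * x j * (‖x‖ ^ 5)⁻¹) * δ i i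
        - (3 * α / 2 * δ k j * (‖x‖ ^ 5)⁻¹ + 15 * β / 2 * x k * x j * (‖x‖ ^ 7)⁻¹) * x i ^ 2
        + 3 * β * x j * (‖x‖ ^ 5)⁻¹ * (δ k i * x i) + 3 * β * x k * (‖x‖ ^ 5)⁻¹ * (δ j i * x i)
        - β * (‖x‖ ^ 3)⁻¹ * (δ k i * δ j i) := by
    intro i
    have hnear : (fun y => pd3 i (kelvin3 α β k j) y) =ᶠ[𝓝 x] kelvin3Deriv α β k j i :=
      eventually_of_mem (isOpen_ne.mem_nhds hx) fun y hy => pd3_kelvin3 α β k j i hy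
    rw [pd3_congr_of_eventuallyEq hnear, pd3_kelvin3Deriv α β k j i i hx]
    ring
  simp only [hterm, Finset.sum_add_distrib, Finset.sum_sub_distrib, ← Finset.mul_sum,
    sum_kroneckerDelta_mul, sum_kroneckerDelta_self, ← EuclideanSpace.real_norm_sq_eq,
    Fintype.card_fin]
  rw [kroneckerDelta_comm j k]
  field_simp
  ring

theorem pd3_sum_pd3_kelvin3 (α β : ℝ) (j k : Fin 3) {x : E3} (hx : x ≠ 0) :
    pd3 k (fun y => ∑ i, pd3 i (kelvin3 α β i j) y) x
      = (α - β) / 2 * (δ k j * (‖x‖ ^ 3)⁻¹ - 3 * x k * x j * (‖x‖ ^ 5)⁻¹) := by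
  have hnear : (fun y => ∑ i, pd3 i (kelvin3 α β i j) y)
      =ᶠ[𝓝 x] fun y => (α - β) / 2 * (y j * (‖y‖ ^ 3)⁻¹) :=
    eventually_of_mem (isOpen_ne.mem_nhds hx) fun y hy => sum_pd3_kelvin3 α β j hy
  rw [pd3_congr_of_eventuallyEq hnear, pd3_eq_of_hasFDerivAt
    (((EuclideanSpace.hasFDerivAt_apply j x).fun_mul (hasFDerivAt_inv_norm_pow 3 hx)).const_mul _)]
  simp only [add_apply, smul_apply, smul_eq_mul, EuclideanSpace.innerSL_single_one,
    EuclideanSpace.proj_single_one, kroneckerDelta_comm j k]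
  push_cast
  ring

theorem kelvin3_solves_lame_general
    (l0 m0 : ℝ)
    (α β : ℝ)
    (hα : α = (l0 + 3 * m0) / (4 * Real.pi * m0 * (l0 + 2 * m0)))
    (hβ : β = (l0 + m0) / (4 * Real.pi * m0 * (l0 + 2 * m0)))
    (x : EuclideanSpace ℝ (Fin 3)) (hx : x ≠ 0) (j k : Fin 3) :
    m0 * (∑ i, pd3 i (fun y => pd3 i (kelvin3 α β k j) y) x)
      + (l0 + m0) * pd3 k (fun y => ∑ i, pd3 i (kelvin3 α β i j) y) x = 0 := by
  rw [sum_pd3_pd3_kelvin3 α β j k hx, pd3_sum_pd3_kelvin3 α β j k hx]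
  have hcoeff : m0 * β = (l0 + m0) * ((α - β) / 2) := by
    rw [hα, hβ]
    ring
  linear_combination (3 * x k * x j * (‖x‖ ^ 5)⁻¹ - δ k j * (‖x‖ ^ 3)⁻¹) * hcoeff

theorem kelvin3_solves_lame
    (l0 m0 : ℝ) (hm : 0 < m0) (hl : 0 < l0 + 2 * m0)
    (α β : ℝ)
    (hα : α = (l0 + 3 * m0) / (4 * Real.pi * m0 * (l0 + 2 * m0)))
    (hβ : β = (l0 + m0) / (4 * Real.pi * m0 * (l0 + 2 * m0)))
    (x : EuclideanSpace ℝ (Fin 3)) (hx : x ≠ 0) (j k : Fin 3) :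
    m0 * (∑ i, pd3 i (fun y => pd3 i (kelvin3 α β k j) y) x)
      + (l0 + m0) * pd3 k (fun y => ∑ i, pd3 i (kelvin3 α β i j) y) x = 0 :=
  kelvin3_solves_lame_general l0 m0 α β hα hβ x hx j k
end

section
/- Let λ₀, μ₀ ∈ ℝ with μ₀ > 0 and λ₀ + 2μ₀ > 0, and let Γ be the two-dimensional Kelvin matrix. Then for all x, y ∈ ℝ² with x ≠ y and all i, j, k ∈ {1,2}, the partial derivative of the entry γ_{ij}(x − y) with respect to y_k equals −α·δ_{ij}·(x_k−y_k)/|x−y|² + β·δ_{ik}·(x_j−y_j)/|x−y|² + β·δ_{jk}·(x_i−y_i)/|x−y|² − 2β·(x_i−y_i)(x_j−y_j)(x_k−y_k)/|x−y|⁴. -/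
section InnerProductSpace

variable {E : Type*} [NormedAddCommGroup E] [InnerProductSpace ℝ E] {v : E}

theorem hasFDerivAt_log_norm (hv : v ≠ 0) :
    HasFDerivAt (fun w : E => Real.log ‖w‖) ((‖v‖ ^ 2)⁻¹ • innerSL ℝ v) v := by
  have hlog : (fun w : E => Real.log ‖w‖) = fun w => 1 / 2 * Real.log (‖w‖ ^ 2) := by
    funext w
    rw [Real.log_pow]
    ring
  rw [hlog]
  refine (((hasStrictFDerivAt_norm_sq v).hasFDerivAt.log (by positivity)).const_mul
    (1 / 2 : ℝ)).congr_fderiv ?_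
  ext w
  simp
  ring

theorem hasFDerivAt_inv_norm_sq (hv : v ≠ 0) :
    HasFDerivAt (fun w : E => (‖w‖ ^ 2)⁻¹) ((-2 / ‖v‖ ^ 4) • innerSL ℝ v) v := by
  refine ((hasDerivAt_inv (by positivity)).comp_hasFDerivAt v
    (hasStrictFDerivAt_norm_sq v).hasFDerivAt).congr_fderiv ?_
  ext w
  simp
  ring

end InnerProductSpace

theorem hasFDerivAt_kelvin2 (α β : ℝ) (i j : Fin 2) {v : EuclideanSpace ℝ (Fin 2)}
    (hv : v ≠ 0) :
    HasFDerivAt (kelvin2 α β i j)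
      ((α * (if i = j then (1 : ℝ) else 0) / ‖v‖ ^ 2 + 2 * β * v i * v j / ‖v‖ ^ 4) •
          innerSL ℝ v -
        (β / ‖v‖ ^ 2) • (v j • EuclideanSpace.proj i + v i • EuclideanSpace.proj j)) v := by
  have hcoord (t : Fin 2) := PiLp.hasFDerivAt_apply (𝕜 := ℝ) 2 v t
  have h := ((hasFDerivAt_log_norm hv).const_mul (α * (if i = j then (1 : ℝ) else 0))).sub
    ((((hcoord i).const_mul β).mul (hcoord j)).mul (hasFDerivAt_inv_norm_sq hv))
  have hfun : kelvin2 α β i j = fun w => α * (if i = j then (1 : ℝ) else 0) * Real.log ‖w‖ -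
      β * w i * w j * (‖w‖ ^ 2)⁻¹ := by
    funext w
    simp only [kelvin2, div_eq_mul_inv]
  rw [hfun]
  refine h.congr_fderiv ?_
  ext w
  by_cases hij : i = j <;> simp [hij] <;> ring

theorem kelvin2_first_derivative_general
    (α β : ℝ)
    (x y : EuclideanSpace ℝ (Fin 2)) (hxy : x ≠ y) (i j k : Fin 2) :
    pd2 k (fun z => kelvin2 α β i j (x - z)) y =
      -α * (if i = j then (1 : ℝ) else 0) * (x k - y k) / ‖x - y‖ ^ 2
        + β * (if i = k then (1 : ℝ) else 0) * (x j - y j) / ‖x - y‖ ^ 2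
        + β * (if j = k then (1 : ℝ) else 0) * (x i - y i) / ‖x - y‖ ^ 2
        - 2 * β * (x i - y i) * (x j - y j) * (x k - y k) / ‖x - y‖ ^ 4 := by
  have hγ : HasFDerivAt (fun z => kelvin2 α β i j (x - z)) _ y :=
    (hasFDerivAt_kelvin2 α β i j (sub_ne_zero.2 hxy)).comp y ((hasFDerivAt_id y).const_sub x)
  rw [pd2, hγ.fderiv]
  simp [EuclideanSpace.inner_single_right]
  split_ifs <;> ring

theorem kelvin2_first_derivative
    (l0 m0 : ℝ) (hm : 0 < m0) (hl : 0 < l0 + 2 * m0)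
    (α β : ℝ)
    (hα : α = (l0 + 3 * m0) / (4 * Real.pi * m0 * (l0 + 2 * m0)))
    (hβ : β = (l0 + m0) / (4 * Real.pi * m0 * (l0 + 2 * m0)))
    (x y : EuclideanSpace ℝ (Fin 2)) (hxy : x ≠ y) (i j k : Fin 2) :
    pd2 k (fun z => kelvin2 α β i j (x - z)) y =
      -α * (if i = j then (1 : ℝ) else 0) * (x k - y k) / ‖x - y‖ ^ 2
        + β * (if i = k then (1 : ℝ) else 0) * (x j - y j) / ‖x - y‖ ^ 2
        + β * (if j = k then (1 : ℝ) else 0) * (x i - y i) / ‖x - y‖ ^ 2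
        - 2 * β * (x i - y i) * (x j - y j) * (x k - y k) / ‖x - y‖ ^ 4 :=
  kelvin2_first_derivative_general α β x y hxy i j k
end

section
/- Let Π be a real J×K matrix, let X₀ be a real K×M matrix, and set Y := Π·X₀. Let k be the number of nonzero rows of X₀ (rows that are not identically zero) and let r := rank(Y). Assume that every family of at most 2k − r + 1 columns of Π is linearly independent. Then any real K×M matrix X satisfying Π·X = Y and having at most k nonzero rows equals X₀. -/
open Matrix

/-- `‖X‖₀` for a matrix: the number of rows containing a nonzero element. -/
noncomputable def rowSparsity {K M : ℕ} (X : Matrix (Fin K) (Fin M) ℝ) : ℕ :=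
  {i : Fin K | X i ≠ 0}.ncard

/-!
Put `Z = X - X₀`, let `T` and `T₀` be the sets of nonzero rows of `X` and `X₀`, and `S = T ∪ T₀`.
Then `A Z = 0` and `Z` is supported on `S`, so Sylvester's inequality gives
`rank A_S + rank Z ≤ |S|` for the column submatrix `A_S`, while the spark hypothesis gives
`rank A_S ≥ min(|S|, 2k - r + 1)`. Off `T ∩ T₀` every row of `X` is zero or a row
of `Z`, hence `r ≤ rank X ≤ rank Z + |T ∩ T₀|`. Since `|S| + |T ∩ T₀| = |T| + |T₀| ≤ 2k`, these
inequalities force `rank Z = 0`.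
-/

open Finset Submodule

namespace Matrix

variable {l m n R : Type*} [Field R]

theorem min_card_le_rank_submatrix_of_linearIndependent [Fintype l] (A : Matrix l m R)
    (S : Finset m) (N : ℕ)
    (hA : ∀ s ⊆ S, #s ≤ N → LinearIndependent R fun j : s => Aᵀ j) :
    min #S N ≤ (A.submatrix id (Subtype.val : S → m)).rank := by
  obtain ⟨T, hTS, hT⟩ := exists_subset_card_eq (min_le_left #S N)
  have hrankT : (A.submatrix id (Subtype.val : T → m)).rank = #T := by
    rw [← rank_transpose, ← Fintype.card_coe]
    exact LinearIndependent.rank_matrix (M := (A.submatrix id Subtype.val)ᵀ)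
      (hA T hTS (hT.le.trans (min_le_right _ _)))
  calc min #S N = (A.submatrix id (Subtype.val : T → m)).rank := by rw [hrankT, hT]
    _ = ((A.submatrix id (Subtype.val : S → m)).submatrix id fun t : T => ⟨t, hTS t.2⟩).rank :=
        rfl
    _ ≤ _ := rank_submatrix_le _ _ _

variable [Fintype m]

theorem eq_zero_of_rank_eq_zero {A : Matrix l m R} (h : A.rank = 0) : A = 0 := by
  classical
  rw [rank, Submodule.finrank_eq_zero, LinearMap.range_eq_bot] at h
  exact toLin'.injective (by rw [toLin'_apply', h, map_zero])

theorem rank_le_rank_add_card_of_row_mem_span [Fintype n] (X Z : Matrix m n R) (T : Finset m)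
    (hT : ∀ i ∉ T, X i ∈ span R (Set.range Z.row)) : X.rank ≤ Z.rank + #T := by
  rw [rank_eq_finrank_span_row, rank_eq_finrank_span_row]
  have hle : span R (Set.range X.row) ≤
      span R (Set.range Z.row) ⊔ span R (Set.range fun i : T => X i) := by
    rw [span_le]
    rintro _ ⟨i, rfl⟩
    by_cases hi : i ∈ T
    · exact mem_sup_right (subset_span ⟨⟨i, hi⟩, rfl⟩)
    · exact mem_sup_left (hT i hi)
  calc Module.finrank R (span R (Set.range X.row))
      ≤ Module.finrank R ↥(span R (Set.range Z.row) ⊔ span R (Set.range fun i : T => X i)) :=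
        finrank_mono hle
    _ ≤ Module.finrank R (span R (Set.range Z.row)) +
          Module.finrank R (span R (Set.range fun i : T => X i)) :=
        finrank_add_le_finrank_add_finrank _ _
    _ ≤ Module.finrank R (span R (Set.range Z.row)) + #T := by
        have := finrank_range_le_card (R := R) fun i : T => X i
        rw [Fintype.card_coe] at this
        exact Nat.add_le_add_left this _

theorem rank_submatrix_add_rank_le_card_of_mul_eq_zero [Finite l] [Fintype n]
    {A : Matrix l m R} {Z : Matrix m n R} (hAZ : A * Z = 0) (S : Finset m)
    (hZ : ∀ i ∉ S, Z i = 0) : (A.submatrix id (Subtype.val : S → m)).rank + Z.rank ≤ #S := by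
  classical
  -- The type ascriptions keep elaboration on `Matrix` multiplication rather than `CStarMatrix`'s.
  have hE : ((1 : Matrix m m R).submatrix id Subtype.val : Matrix m S R) *
      (Z.submatrix Subtype.val id : Matrix S n R) = Z := by
    ext i c
    rw [mul_apply]
    simp only [submatrix_apply, id, one_apply, ite_mul, one_mul, zero_mul]
    rw [Finset.sum_coe_sort S fun j => if i = j then Z j c else 0, Finset.sum_ite_eq]
    split_ifs with hi
    · rfl
    · exact (congrFun (hZ i hi) c).symm
  have hmul : (A.submatrix id Subtype.val : Matrix l S R) *
      (Z.submatrix Subtype.val id : Matrix S n R) = 0 := by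
    have hAE : A * ((1 : Matrix m m R).submatrix id Subtype.val : Matrix m S R) =
        A.submatrix id Subtype.val :=
      mul_submatrix_one (Equiv.refl m) _ A
    rw [← hAE, Matrix.mul_assoc, hE, hAZ]
  calc (A.submatrix id (Subtype.val : S → m)).rank + Z.rank
      ≤ (A.submatrix id (Subtype.val : S → m)).rank +
          (Z.submatrix (Subtype.val : S → m) id).rank := by
        conv_lhs => rw [← hE]
        exact Nat.add_le_add_left (rank_mul_le_right _ _) _
    _ ≤ #S := by simpa using rank_add_rank_le_card_of_mul_eq_zero hmul

end Matrix

open Classical in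
theorem rowSparsity_eq_card_filter {K M : ℕ} (X : Matrix (Fin K) (Fin M) ℝ) :
    rowSparsity X = #(univ.filter fun i => X i ≠ 0) := by
  rw [rowSparsity, Set.ncard_eq_toFinset_card', Set.toFinset_ofPred]

theorem mmv_spark_rank_uniqueness
    (J K M : ℕ) (A : Matrix (Fin J) (Fin K) ℝ)
    (X₀ : Matrix (Fin K) (Fin M) ℝ)
    (Y : Matrix (Fin J) (Fin M) ℝ) (hY : Y = A * X₀)
    (k : ℕ) (hk : k = rowSparsity X₀)
    (r : ℕ) (hr : r = Y.rank)
    (hcols : ∀ s : Finset (Fin K), (s.card : ℤ) ≤ 2 * (k : ℤ) - (r : ℤ) + 1 →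
      LinearIndependent ℝ (fun j : s => Aᵀ (j : Fin K)))
    (X : Matrix (Fin K) (Fin M) ℝ) (hX : A * X = Y) (hXk : rowSparsity X ≤ k) :
    X = X₀ := by
  classical
  rw [rowSparsity_eq_card_filter] at hk hXk
  set T := univ.filter fun i => X i ≠ 0
  set T₀ := univ.filter fun i => X₀ i ≠ 0
  have hAZ : A * (X - X₀) = 0 := by rw [Matrix.mul_sub, hX, hY, sub_self]
  have hZ : ∀ i ∉ T ∪ T₀, (X - X₀) i = 0 := by
    intro i hi
    simp only [T, T₀, mem_union, mem_filter, mem_univ, true_and, not_or, not_not] at hi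
    show X i - X₀ i = 0
    rw [hi.1, hi.2, sub_zero]
  have hspan : ∀ i ∉ T ∩ T₀, X i ∈ span ℝ (Set.range (X - X₀).row) := by
    intro i hi
    by_cases hXi : X i = 0
    · rw [hXi]; exact zero_mem _
    · have hX₀i : X₀ i = 0 := by simpa [T, T₀, hXi] using hi
      exact subset_span ⟨i, show X i - X₀ i = X i by rw [hX₀i, sub_zero]⟩
  have hrX : r ≤ X.rank := hr ▸ hX ▸ rank_mul_le_right A X
  have hXT : X.rank ≤ #T :=
    rank_le_card_of_support_subset X T fun i hi => by simpa [T, row_apply'] using hi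
  have hrank := rank_le_rank_add_card_of_row_mem_span X (X - X₀) _ hspan
  have hnull := rank_submatrix_add_rank_le_card_of_mul_eq_zero hAZ _ hZ
  have hind := min_card_le_rank_submatrix_of_linearIndependent A (T ∪ T₀) (2 * k - r + 1)
    fun s _ hs => hcols s (by omega)
  have hcard := card_union_add_card_inter T T₀
  exact sub_eq_zero.mp (eq_zero_of_rank_eq_zero (by omega))
end
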